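/- arXiv:1912.11219 — 2 statements merged into one kernel-verified Lean document; each statement's English description precedes it below -/
import Mathlib

section
/- For measurable nonnegative functions f_{01}, f_{10}, f_{11} in L^{3/2}(ℝ^d), the 2nd cubic convolution product D_2(f_{01},f_{10},f_{11})(x) = ∫∫ f_{01}(x+t_1) f_{10}(x+t_2) f_{11}(x+t_1+t_2) dt_1 dt_2 satisfies the pointwise bound D_2(f_{01},f_{10},f_{11})(x) ≤ C · ‖f_{01}‖_{3/2} ‖f_{10}‖_{3/2} ‖f_{11}‖_{3/2} for some constant C depending only on d and for every x ∈ ℝ^d. -/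
/-!
With `a = |f|^{3/2}`, `b = |g|^{3/2}`, `c = |h|^{3/2}`, the integrand `|f(s) g(t) h(s+t)|` is the
geometric mean of the pairwise products `a(s) b(t)`, `b(t) c(s+t)`, `a(s) c(s+t)`. Hölder's
inequality on `G × G` with three exponents equal to `3` bounds its integral by the cube roots of
three double integrals, and each of these factors as a product of two single integrals by Fubini
and translation invariance. This is Young's convolution argument for the exponents
`3/2, 3/2, 3/2`, with constant `1`.
-/

open MeasureTheory Filter
open scoped ENNReal

noncomputable section

/-- The zero vertex of the discrete cube `{0,1}^k`. -/
def vzero (k : ℕ) : Fin k → Bool := fun _ => false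

/-- `α · h = α₁ h₁ + ⋯ + α_k h_k` for a vertex `α ∈ {0,1}^k` and `h ∈ (ℝ^d)^k`. -/
def dotB {k d : ℕ} (α : Fin k → Bool) (h : Fin k → Fin d → ℝ) : Fin d → ℝ :=
  ∑ i, if α i then h i else 0

/-- Generalized cubic convolution product `D_k(f_α : α ∈ Ṽ_k)(x)`. -/
def cubeD (k d : ℕ) (f : (Fin k → Bool) → (Fin d → ℝ) → ℝ) (x : Fin d → ℝ) : ℝ :=
  ∫ h : Fin k → Fin d → ℝ,
    ∏ α ∈ Finset.univ.filter (fun α : Fin k → Bool => α ≠ vzero k), f α (x + dotB α h)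

/-- The Gowers–Host–Kra dual function `D_k f`. -/
def dualFn (k d : ℕ) (f : (Fin d → ℝ) → ℝ) : (Fin d → ℝ) → ℝ :=
  cubeD k d fun _ => f

/-- The Gowers inner product `T_k(f_α : α ∈ V_k)`. -/
def gowersT (k d : ℕ) (f : (Fin k → Bool) → (Fin d → ℝ) → ℝ) : ℝ :=
  ∫ x : Fin d → ℝ, ∫ h : Fin k → Fin d → ℝ, ∏ α : Fin k → Bool, f α (x + dotB α h)

/-- The Gowers–Host–Kra uniformity norm `‖f‖_{U(k)}`. -/
def gowersNorm (k d : ℕ) (f : (Fin d → ℝ) → ℝ) : ℝ :=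
  (gowersT k d fun _ => f) ^ ((1 : ℝ) / 2 ^ k)

/-- The `L^p` norm (as a real number) of a function on `ℝ^d`. -/
def lpN (d : ℕ) (p : ℝ≥0∞) (f : (Fin d → ℝ) → ℝ) : ℝ :=
  (eLpNorm f p volume).toReal

/-- `p_k = 2^k/(k+1)`. -/
def pkR (k : ℕ) : ℝ := 2 ^ k / (k + 1)

/-- `q_k = (2^k-1)/k`. -/
def qkR (k : ℕ) : ℝ := ((2 : ℝ) ^ k - 1) / k

/-- `s_k = 2^k/(2^k-k-1)`, the Hölder conjugate of `p_k`. -/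
def skR (k : ℕ) : ℝ := 2 ^ k / (2 ^ k - k - 1)

/-- The duality pairing `⟨g, f⟩ = ∫ g f`. -/
def pair (d : ℕ) (g f : (Fin d → ℝ) → ℝ) : ℝ := ∫ x, g x * f x

/-- The set of values `|⟨g,f⟩|` over `f ∈ L^{p_k}` with `‖f‖_{U(k)} ≤ 1`. -/
def dualSet (k d : ℕ) (g : (Fin d → ℝ) → ℝ) : Set ℝ :=
  { r | ∃ f : (Fin d → ℝ) → ℝ, MemLp f (ENNReal.ofReal (pkR k)) volume ∧
      gowersNorm k d f ≤ 1 ∧ r = |pair d g f| }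

/-- The anti-uniform norm `‖g‖_{U(k)}^*`. -/
def dualNorm (k d : ℕ) (g : (Fin d → ℝ) → ℝ) : ℝ :=
  sSup (dualSet k d g)

/-- The second cubic convolution product `D₂(f₀₁, f₁₀, f₁₁)(x)`. -/
def D2 (d : ℕ) (f01 f10 f11 : (Fin d → ℝ) → ℝ) (x : Fin d → ℝ) : ℝ :=
  ∫ t1 : Fin d → ℝ, ∫ t2 : Fin d → ℝ, f01 (x + t1) * f10 (x + t2) * f11 (x + t1 + t2)

theorem ENNReal.rpow_two_thirds_mul_mul (x y z : ℝ≥0∞) :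
    (x * y * z) ^ (2 / 3 : ℝ) =
      (x * y) ^ (1 / 3 : ℝ) * (y * z) ^ (1 / 3 : ℝ) * (x * z) ^ (1 / 3 : ℝ) := by
  rw [← ENNReal.mul_rpow_of_nonneg _ _ (by norm_num),
    ← ENNReal.mul_rpow_of_nonneg _ _ (by norm_num), show (2 / 3 : ℝ) = 2 * (1 / 3) by norm_num,
    ENNReal.rpow_mul, ENNReal.rpow_two]
  ring_nf

theorem eLpNorm_three_halves_eq {α E : Type*} [MeasurableSpace α] {μ : Measure α}
    [NormedAddCommGroup E] (f : α → E) :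
    eLpNorm f (3 / 2) μ = (∫⁻ x, ‖f x‖ₑ ^ (3 / 2 : ℝ) ∂μ) ^ (2 / 3 : ℝ) := by
  rw [eLpNorm_eq_lintegral_rpow_enorm_toReal (by norm_num) (by finiteness)]
  norm_num [ENNReal.toReal_div]

section
variable {G : Type*} [MeasurableSpace G] [AddCommGroup G] [MeasurableAdd₂ G] [MeasurableNeg G]
  {μ : Measure G} [SFinite μ] [μ.IsAddLeftInvariant]

theorem lintegral_prod_mul_add_left {a c : G → ℝ≥0∞} (ha : AEMeasurable a μ)
    (hc : AEMeasurable c μ) :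
    ∫⁻ p, a p.1 * c (p.1 + p.2) ∂μ.prod μ = (∫⁻ x, a x ∂μ) * ∫⁻ x, c x ∂μ := by
  rw [← lintegral_prod_mul ha hc]
  exact (measurePreserving_prod_add μ μ).lintegral_comp_emb
    (MeasurableEquiv.shearAddRight G).measurableEmbedding (fun p => a p.1 * c p.2)

theorem lintegral_prod_mul_add_right {b c : G → ℝ≥0∞} (hb : AEMeasurable b μ)
    (hc : AEMeasurable c μ) :
    ∫⁻ p, b p.2 * c (p.1 + p.2) ∂μ.prod μ = (∫⁻ x, b x ∂μ) * ∫⁻ x, c x ∂μ := by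
  rw [← lintegral_prod_mul_add_left hb hc, ← lintegral_prod_swap]
  simp only [Prod.fst_swap, Prod.snd_swap, add_comm]

theorem lintegral_prod_mul_mul_add_rpow_le {a b c : G → ℝ≥0∞} (ha : AEMeasurable a μ)
    (hb : AEMeasurable b μ) (hc : AEMeasurable c μ) :
    ∫⁻ p, (a p.1 * b p.2 * c (p.1 + p.2)) ^ (2 / 3 : ℝ) ∂μ.prod μ ≤
      ((∫⁻ x, a x ∂μ) * (∫⁻ x, b x ∂μ) * ∫⁻ x, c x ∂μ) ^ (2 / 3 : ℝ) := by
  have holder := ENNReal.lintegral_prod_norm_pow_le (μ := μ.prod μ) Finset.univ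
    (f := ![fun p => a p.1 * b p.2, fun p => b p.2 * c (p.1 + p.2),
      fun p => a p.1 * c (p.1 + p.2)])
    (p := fun _ => 1 / 3) (by intro i _; fin_cases i <;> simp <;> fun_prop) (by norm_num)
    (by norm_num)
  simp only [Fin.prod_univ_three, Matrix.cons_val_zero, Matrix.cons_val_one, Matrix.cons_val_two,
    Matrix.head_cons, Matrix.tail_cons] at holder
  rw [lintegral_prod_mul ha hb, lintegral_prod_mul_add_right hb hc,
    lintegral_prod_mul_add_left ha hc] at holder
  simpa only [ENNReal.rpow_two_thirds_mul_mul] using holder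

theorem lintegral_prod_enorm_mul_mul_add_le {f g h : G → ℝ} (hf : AEStronglyMeasurable f μ)
    (hg : AEStronglyMeasurable g μ) (hh : AEStronglyMeasurable h μ) :
    ∫⁻ p, ‖f p.1 * g p.2 * h (p.1 + p.2)‖ₑ ∂μ.prod μ ≤
      eLpNorm f (3 / 2) μ * eLpNorm g (3 / 2) μ * eLpNorm h (3 / 2) μ := by
  have h23 : (0 : ℝ) ≤ 2 / 3 := by norm_num
  calc ∫⁻ p, ‖f p.1 * g p.2 * h (p.1 + p.2)‖ₑ ∂μ.prod μ
      = ∫⁻ p, (‖f p.1‖ₑ ^ (3 / 2 : ℝ) * ‖g p.2‖ₑ ^ (3 / 2 : ℝ) *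
          ‖h (p.1 + p.2)‖ₑ ^ (3 / 2 : ℝ)) ^ (2 / 3 : ℝ) ∂μ.prod μ := by
        congr with p
        simp only [enorm_mul, ENNReal.mul_rpow_of_nonneg _ _ h23, ← ENNReal.rpow_mul]
        norm_num
    _ ≤ ((∫⁻ x, ‖f x‖ₑ ^ (3 / 2 : ℝ) ∂μ) * (∫⁻ x, ‖g x‖ₑ ^ (3 / 2 : ℝ) ∂μ) *
          ∫⁻ x, ‖h x‖ₑ ^ (3 / 2 : ℝ) ∂μ) ^ (2 / 3 : ℝ) :=
        lintegral_prod_mul_mul_add_rpow_le (by fun_prop) (by fun_prop) (by fun_prop)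
    _ = eLpNorm f (3 / 2) μ * eLpNorm g (3 / 2) μ * eLpNorm h (3 / 2) μ := by
        simp only [eLpNorm_three_halves_eq, ENNReal.mul_rpow_of_nonneg _ _ h23]

theorem integral_integral_mul_mul_add_le {f g h : G → ℝ} (hf : MemLp f (3 / 2) μ)
    (hg : MemLp g (3 / 2) μ) (hh : MemLp h (3 / 2) μ) :
    ∫ s, ∫ t, f s * g t * h (s + t) ∂μ ∂μ ≤
      (eLpNorm f (3 / 2) μ).toReal * (eLpNorm g (3 / 2) μ).toReal *
        (eLpNorm h (3 / 2) μ).toReal := by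
  set F : G × G → ℝ := fun p => f p.1 * g p.2 * h (p.1 + p.2)
  have hbound : ∫⁻ p, ‖F p‖ₑ ∂μ.prod μ ≤
      eLpNorm f (3 / 2) μ * eLpNorm g (3 / 2) μ * eLpNorm h (3 / 2) μ :=
    lintegral_prod_enorm_mul_mul_add_le hf.1 hg.1 hh.1
  have hfinite : eLpNorm f (3 / 2) μ * eLpNorm g (3 / 2) μ * eLpNorm h (3 / 2) μ ≠ ∞ :=
    ENNReal.mul_ne_top (ENNReal.mul_ne_top hf.2.ne hg.2.ne) hh.2.ne
  have hF : Integrable F (μ.prod μ) :=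
    ⟨(hf.1.comp_fst.mul hg.1.comp_snd).mul
      (hh.1.comp_quasiMeasurePreserving (quasiMeasurePreserving_add μ μ)),
      hbound.trans_lt hfinite.lt_top⟩
  rw [← integral_prod F hF, ← ENNReal.toReal_mul, ← ENNReal.toReal_mul]
  calc ∫ p, F p ∂μ.prod μ ≤ (∫⁻ p, ‖F p‖ₑ ∂μ.prod μ).toReal :=
        (Real.le_norm_self _).trans
          (by simpa only [ofReal_norm] using norm_integral_le_lintegral_norm (μ := μ.prod μ) F)
    _ ≤ _ := ENNReal.toReal_mono hfinite hbound

end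

/-- pointwise bound for `D₂` by the product of `L^{3/2}` norms. -/
theorem stmt0 (d : ℕ) :
    ∃ C : ℝ, 0 < C ∧
      ∀ f01 f10 f11 : (Fin d → ℝ) → ℝ,
        Measurable f01 → Measurable f10 → Measurable f11 →
        (∀ x, 0 ≤ f01 x) → (∀ x, 0 ≤ f10 x) → (∀ x, 0 ≤ f11 x) →
        MemLp f01 (3 / 2) volume → MemLp f10 (3 / 2) volume → MemLp f11 (3 / 2) volume →
        ∀ x : Fin d → ℝ,
          D2 d f01 f10 f11 x ≤
            C * lpN d (3 / 2) f01 * lpN d (3 / 2) f10 * lpN d (3 / 2) f11 := by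
  refine ⟨1, one_pos, fun f01 f10 f11 _ _ _ _ _ _ h01 h10 h11 x => ?_⟩
  have translate := measurePreserving_add_left (volume : Measure (Fin d → ℝ)) x
  have key := integral_integral_mul_mul_add_le (h01.comp_measurePreserving translate)
    (h10.comp_measurePreserving translate) (h11.comp_measurePreserving translate)
  rw [eLpNorm_comp_measurePreserving h01.1 translate,
    eLpNorm_comp_measurePreserving h10.1 translate,
    eLpNorm_comp_measurePreserving h11.1 translate] at key
  simpa only [D2, lpN, one_mul, Function.comp_def, ← add_assoc] using key
end
end

section
/- Let k ≥ 2, q_k = (2^k-1)/k, and for nonnegative measurable functions (f_α : α ∈ Ṽ_k) on ℝ^d define the cubic convolution product D_k(f_α : α ∈ Ṽ_k)(x) = ∫_{ℝ^{kd}} ∏_{α∈Ṽ_k} f_α(x + α·h) dh. Then there is a constant C = C(k,d) such that for every x, D_k(f_α : α ∈ Ṽ_k)(x) ≤ C · ∏_{α∈Ṽ_k} ‖f_α‖_{q_k}. -/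
/-!
Induction on `k`. Splitting `h = (t, h')` and pairing the vertices `(0, β)`, `(1, β)` writes
`D_{k+1}(F)(x)` as `∫ F_{(1,0)}(x + t) D_k(F_{(0,β)} · F_{(1,β)}(· + t))(x) dt`. The induction
hypothesis bounds the inner cubic product by `∏_β ‖F_{(0,β)} · F_{(1,β)}(· + t)‖_{q_k}`. Hölder in
`t`, with exponent `q_{k+1}` and `2^k - 1` copies of `r` where `1/r = 2/q_{k+1} - 1/q_k`, followed
by Young's inequality `‖t ↦ ‖U · V(· + t)‖_q‖_r ≤ ‖U‖_Q ‖V‖_Q` closes the induction. For real `f`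
one bounds `|D_k f|` by the cubic product of the `|f_α|`.
-/

open MeasureTheory Filter
open scoped ENNReal

noncomputable section

open Finset

lemma qkR_pos {k : ℕ} (hk : 1 ≤ k) : 0 < qkR k := by
  have h2k : (k : ℝ) + 1 ≤ 2 ^ k := by exact_mod_cast Nat.lt_two_pow_self
  have hk' : (1 : ℝ) ≤ k := by exact_mod_cast hk
  exact div_pos (by linarith) (by linarith)

lemma one_div_qkR (k : ℕ) : 1 / qkR k = k / (2 ^ k - 1) := one_div_div _ _

lemma qkR_le_qkR_succ {k : ℕ} (hk : 1 ≤ k) : qkR k ≤ qkR (k + 1) := by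
  have h2k : (k : ℝ) + 1 ≤ 2 ^ k := by exact_mod_cast Nat.lt_two_pow_self
  have hk' : (1 : ℝ) ≤ k := by exact_mod_cast hk
  rw [qkR, qkR, div_le_div_iff₀ (by linarith) (by positivity)]
  push_cast
  rw [pow_succ]
  nlinarith

lemma two_div_qkR_succ_sub_one_div_qkR_pos (k : ℕ) : 0 < 2 / qkR (k + 1) - 1 / qkR k := by
  rw [div_eq_mul_one_div, one_div_qkR, one_div_qkR]
  have h2k : (k : ℝ) + 1 ≤ 2 ^ k := by exact_mod_cast Nat.lt_two_pow_self
  rcases Nat.eq_zero_or_pos k with rfl | hk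
  · norm_num
  have hk' : (1 : ℝ) ≤ k := by exact_mod_cast hk
  rw [sub_pos, div_lt_iff₀ (by linarith), pow_succ]
  push_cast
  rw [mul_div_assoc', div_mul_eq_mul_div, lt_div_iff₀ (by linarith)]
  nlinarith

-- Also true for `k = 0`, where `qkR 0 = 0`: this lets the induction below start at `k = 0`.
lemma qkR_succ_holder_exponents (k : ℕ) :
    1 / qkR (k + 1) + (2 ^ k - 1) * (2 / qkR (k + 1) - 1 / qkR k) = 1 := by
  rw [div_eq_mul_one_div 2, one_div_qkR, one_div_qkR]
  rcases Nat.eq_zero_or_pos k with rfl | hk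
  · norm_num
  have h2k : (k : ℝ) + 1 ≤ 2 ^ k := by exact_mod_cast Nat.lt_two_pow_self
  have hk' : (1 : ℝ) ≤ k := by exact_mod_cast hk
  have h1 : (2 : ℝ) ^ k - 1 ≠ 0 := by linarith
  have h2 : (2 : ℝ) ^ (k + 1) - 1 ≠ 0 := by rw [pow_succ]; linarith
  field_simp
  push_cast
  ring

theorem lintegral_mul_prod_le_eLpNorm'_mul_prod {α ι : Type*} [MeasurableSpace α] {μ : Measure α}
    (s : Finset ι) {g : α → ℝ≥0∞} {f : ι → α → ℝ≥0∞} (hg : AEMeasurable g μ)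
    (hf : ∀ i ∈ s, AEMeasurable (f i) μ) {p : ℝ} {r : ι → ℝ} (hp : 0 < p)
    (hr : ∀ i ∈ s, 0 < r i) (hpr : 1 / p + ∑ i ∈ s, 1 / r i = 1) :
    ∫⁻ a, g a * ∏ i ∈ s, f i a ∂μ ≤ eLpNorm' g p μ * ∏ i ∈ s, eLpNorm' (f i) (r i) μ := by
  have holder := ENNReal.lintegral_mul_prod_norm_pow_le s (hg.pow_const p)
    (fun i hi => (hf i hi).pow_const (r i)) (1 / p) hpr (by positivity)
    (fun i hi => (one_div_pos.2 (hr i hi)).le)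
  simp only [eLpNorm', enorm_eq_self, one_div] at holder ⊢
  convert holder using 3 with a
  rw [ENNReal.rpow_rpow_inv hp.ne']
  exact congrArg _ (prod_congr rfl fun i hi => (ENNReal.rpow_rpow_inv (hr i hi).ne' _).symm)

section Young

variable {G : Type*} [MeasurableSpace G] [AddGroup G] {μ : Measure G}

lemma lintegral_lintegral_mul_comp_add [MeasurableAdd₂ G] [SFinite μ] [μ.IsAddLeftInvariant]
    {U V : G → ℝ≥0∞} (hU : Measurable U) (hV : Measurable V) :
    ∫⁻ t, ∫⁻ y, U y * V (y + t) ∂μ ∂μ = (∫⁻ y, U y ∂μ) * ∫⁻ y, V y ∂μ := by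
  rw [lintegral_lintegral_swap (by fun_prop)]
  calc ∫⁻ y, ∫⁻ t, U y * V (y + t) ∂μ ∂μ = ∫⁻ y, U y * ∫⁻ t, V (y + t) ∂μ ∂μ :=
        lintegral_congr fun y => lintegral_const_mul _ (hV.comp (measurable_const_add y))
    _ = (∫⁻ y, U y ∂μ) * ∫⁻ y, V y ∂μ := by
        simp_rw [lintegral_add_left_eq_self V]
        exact lintegral_mul_const _ hU

lemma eLpNorm'_mul_comp_add_rpow_le [MeasurableAdd G] [μ.IsAddRightInvariant]
    {U V : G → ℝ≥0∞} (hU : Measurable U) (hV : Measurable V) {q Q r : ℝ} (hq : 0 < q)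
    (hQ : 0 < Q) (hr : 0 < r) (he : 0 ≤ 1 / Q - 1 / r) (hqQr : 1 / q + 1 / r = 2 / Q) (t : G) :
    eLpNorm' (fun y => U y * V (y + t)) q μ ^ r ≤
      (∫⁻ y, U y ^ Q * V (y + t) ^ Q ∂μ) *
        ((∫⁻ y, U y ^ Q ∂μ) * ∫⁻ y, V y ^ Q ∂μ) ^ (r * (1 / Q - 1 / r)) := by
  set e := 1 / Q - 1 / r
  -- Hölder with exponents `r/q`, `1/(qe)`, `1/(qe)`
  have hsplit (a b : ℝ≥0∞) : (a * b) ^ q =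
      (a ^ Q * b ^ Q) ^ (q / r) * ((a ^ Q) ^ (q * e) * (b ^ Q) ^ (q * e)) := by
    have hexp : Q * (q / r) + Q * (q * e) = q := by simp only [e]; field_simp; ring
    calc (a * b) ^ q = a ^ (Q * (q / r) + Q * (q * e)) * b ^ (Q * (q / r) + Q * (q * e)) := by
          rw [hexp, ENNReal.mul_rpow_of_nonneg _ _ hq.le]
      _ = _ := by
          rw [ENNReal.rpow_add_of_nonneg _ _ (by positivity) (by positivity),
            ENNReal.rpow_add_of_nonneg _ _ (by positivity) (by positivity),
            ENNReal.mul_rpow_of_nonneg _ _ (by positivity)]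
          simp only [ENNReal.rpow_mul]
          ring
  have hsum : q / r + ∑ _b : Bool, q * e = 1 := by
    calc q / r + ∑ _b : Bool, q * e = q * (2 / Q - 1 / r) := by
          simp only [Fintype.sum_bool, e]; ring
      _ = 1 := by rw [← hqQr]; field_simp; ring
  have hholder := ENNReal.lintegral_mul_prod_norm_pow_le (μ := μ) univ
    (g := fun y => U y ^ Q * V (y + t) ^ Q)
    (f := fun b y => bif b then U y ^ Q else V (y + t) ^ Q) (by fun_prop)
    (fun b _ => by cases b <;> simp only [cond_true, cond_false] <;> fun_prop)
    (q / r) hsum (by positivity) (fun _ _ => by positivity)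
  simp only [Fintype.prod_bool, cond_true, cond_false, ← hsplit,
    lintegral_add_right_eq_self (fun y => V y ^ Q) t] at hholder
  calc eLpNorm' (fun y => U y * V (y + t)) q μ ^ r
      = (∫⁻ y, (U y * V (y + t)) ^ q ∂μ) ^ (r / q) := by
        simp only [eLpNorm', enorm_eq_self, ← ENNReal.rpow_mul]
        ring_nf
    _ ≤ _ := by
        grw [hholder]
        rw [← ENNReal.mul_rpow_of_nonneg _ _ (by positivity),
          ENNReal.mul_rpow_of_nonneg _ _ (by positivity), ← ENNReal.rpow_mul, ← ENNReal.rpow_mul,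
          show q / r * (r / q) = 1 by field_simp, show q * e * (r / q) = r * e by field_simp,
          ENNReal.rpow_one]

/-- Young's convolution inequality, in mixed-norm form. -/
theorem eLpNorm'_eLpNorm'_mul_comp_add_le [MeasurableAdd₂ G] [SFinite μ] [μ.IsAddLeftInvariant]
    [μ.IsAddRightInvariant] {U V : G → ℝ≥0∞} (hU : Measurable U) (hV : Measurable V)
    {q Q r : ℝ} (hq : 0 < q) (hr : 0 < r) (hqQ : q ≤ Q) (hqQr : 1 / q + 1 / r = 2 / Q) :
    eLpNorm' (fun t => eLpNorm' (fun y => U y * V (y + t)) q μ) r μ ≤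
      eLpNorm' U Q μ * eLpNorm' V Q μ := by
  have hQ : 0 < Q := hq.trans_le hqQ
  have he : 0 ≤ 1 / Q - 1 / r := by
    have : 1 / Q ≤ 1 / q := one_div_le_one_div_of_le hq hqQ
    have : 2 / Q = 2 * (1 / Q) := by ring
    linarith
  set IU := ∫⁻ y, U y ^ Q ∂μ
  set IV := ∫⁻ y, V y ^ Q ∂μ
  calc eLpNorm' (fun t => eLpNorm' (fun y => U y * V (y + t)) q μ) r μ
      = (∫⁻ t, eLpNorm' (fun y => U y * V (y + t)) q μ ^ r ∂μ) ^ (1 / r) := by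
        simp only [eLpNorm', enorm_eq_self]
    _ ≤ (∫⁻ t, (∫⁻ y, U y ^ Q * V (y + t) ^ Q ∂μ) * (IU * IV) ^ (r * (1 / Q - 1 / r)) ∂μ) ^
          (1 / r) := by
        gcongr with t
        exact eLpNorm'_mul_comp_add_rpow_le hU hV hq hQ hr he hqQr t
    _ = (IU * IV) ^ (1 / Q) := by
        rw [lintegral_mul_const _ (by fun_prop),
          lintegral_lintegral_mul_comp_add (hU.pow_const Q) (hV.pow_const Q)]
        nth_rewrite 1 [← ENNReal.rpow_one (IU * IV)]
        rw [← ENNReal.rpow_add_of_nonneg _ _ zero_le_one (by positivity), ← ENNReal.rpow_mul]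
        congr 1
        field_simp
        ring
    _ = eLpNorm' U Q μ * eLpNorm' V Q μ := by
        simp only [eLpNorm', enorm_eq_self]
        exact ENNReal.mul_rpow_of_nonneg _ _ (by positivity)

end Young

section Cube

lemma vzero_succ (k : ℕ) : vzero (k + 1) = Fin.cons false (vzero k) := by
  funext i
  exact Fin.cases rfl (fun _ => rfl) i

lemma pos_of_ne_vzero {k : ℕ} {β : Fin k → Bool} (hβ : β ≠ vzero k) : 0 < k :=
  Nat.pos_of_ne_zero (by rintro rfl; exact hβ (Subsingleton.elim _ _))

lemma prod_cube_succ {M : Type*} [CommMonoid M] {k : ℕ} (g : (Fin (k + 1) → Bool) → M) :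
    ∏ α, g α = ∏ b : Bool, ∏ β : Fin k → Bool, g (Fin.cons b β) := by
  rw [← (Fin.consEquiv fun _ => Bool).prod_comp, Fintype.prod_prod_type]
  rfl

lemma prod_erase_vzero_succ {M : Type*} [CommMonoid M] {k : ℕ} (g : (Fin (k + 1) → Bool) → M) :
    ∏ α ∈ univ.erase (vzero (k + 1)), g α =
      (∏ β ∈ univ.erase (vzero k), g (Fin.cons false β)) * ∏ β, g (Fin.cons true β) := by
  simp only [← filter_ne', prod_filter, prod_cube_succ, Fintype.prod_bool, vzero_succ,
    ne_eq, Fin.cons_inj]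
  simp [mul_comm]

variable {k d : ℕ}

@[simp]
lemma dotB_vzero (h : Fin k → Fin d → ℝ) : dotB (vzero k) h = 0 := by
  simp [dotB, vzero]

@[simp]
lemma dotB_cons_false (β : Fin k → Bool) (t : Fin d → ℝ) (h : Fin k → Fin d → ℝ) :
    dotB (Fin.cons false β) (Fin.cons t h) = dotB β h := by
  simp [dotB, Fin.sum_univ_succ]

@[simp]
lemma dotB_cons_true (β : Fin k → Bool) (t : Fin d → ℝ) (h : Fin k → Fin d → ℝ) :
    dotB (Fin.cons true β) (Fin.cons t h) = t + dotB β h := by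
  simp [dotB, Fin.sum_univ_succ]

@[fun_prop]
lemma measurable_dotB (α : Fin k → Bool) : Measurable fun h : Fin k → Fin d → ℝ => dotB α h := by
  unfold dotB
  refine Finset.measurable_sum _ fun i _ => ?_
  cases α i
  · exact measurable_const
  · exact measurable_pi_apply i

end Cube

lemma lintegral_pi_fin_succ {E : Type*} [MeasureSpace E] [SigmaFinite (volume : Measure E)]
    {k : ℕ} {Φ : (Fin (k + 1) → E) → ℝ≥0∞} (hΦ : Measurable Φ) :
    ∫⁻ h, Φ h = ∫⁻ t, ∫⁻ h' : Fin k → E, Φ (Fin.cons t h') := by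
  have hpres := (volume_preserving_piFinSuccAbove (fun _ : Fin (k + 1) => E) 0).symm
  rw [← hpres.lintegral_comp_emb (MeasurableEquiv.measurableEmbedding _), Measure.volume_eq_prod,
    lintegral_prod (fun z => Φ ((MeasurableEquiv.piFinSuccAbove (fun _ => E) 0).symm z))
      (hΦ.comp (MeasurableEquiv.measurable _)).aemeasurable]
  simp [MeasurableEquiv.piFinSuccAbove_symm_apply, Fin.insertNthEquiv, Fin.insertNth_zero']

section CubicProduct

variable {d : ℕ}

/-- Integrating out the first coordinate `t` of `h` pairs the vertices `(0, β)` and `(1, β)`. -/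
lemma lintegral_prod_cube_succ {k : ℕ} (F : (Fin (k + 1) → Bool) → (Fin d → ℝ) → ℝ≥0∞)
    (hF : ∀ α, Measurable (F α)) (x : Fin d → ℝ) :
    ∫⁻ h : Fin (k + 1) → Fin d → ℝ, ∏ α ∈ univ.erase (vzero (k + 1)), F α (x + dotB α h) =
      ∫⁻ t, F (Fin.cons true (vzero k)) (x + t) *
        ∫⁻ h' : Fin k → Fin d → ℝ, ∏ β ∈ univ.erase (vzero k),
          F (Fin.cons false β) (x + dotB β h') * F (Fin.cons true β) (x + dotB β h' + t) := by
  rw [lintegral_pi_fin_succ (Finset.measurable_prod _ fun α _ => by fun_prop)]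
  refine lintegral_congr fun t => ?_
  rw [← lintegral_const_mul _ (Finset.measurable_prod _ fun β _ => by fun_prop)]
  refine lintegral_congr fun h' => ?_
  rw [prod_erase_vzero_succ, ← mul_prod_erase univ _ (mem_univ (vzero k)), prod_mul_distrib]
  simp only [dotB_cons_false, dotB_cons_true, dotB_vzero, add_zero]
  simp_rw [add_comm t, ← add_assoc]
  ring

theorem lintegral_prod_cube_le_prod_eLpNorm' (k : ℕ) (F : (Fin k → Bool) → (Fin d → ℝ) → ℝ≥0∞)
    (hF : ∀ α, Measurable (F α)) (x : Fin d → ℝ) :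
    ∫⁻ h : Fin k → Fin d → ℝ, ∏ α ∈ univ.erase (vzero k), F α (x + dotB α h) ≤
      ∏ α ∈ univ.erase (vzero k), eLpNorm' (F α) (qkR k) volume := by
  induction k with
  | zero => simp [Subsingleton.elim _ (vzero 0), volume_pi]
  | succ k ih =>
    set q := qkR k
    set Q := qkR (k + 1)
    -- `1/q + 1/r = 2/Q` is Young's condition, and then `1/Q + (2^k - 1)/r = 1` is Hölder's.
    set r := (2 / Q - 1 / q)⁻¹
    have hQ : 0 < Q := qkR_pos (by omega)
    have hr : 0 < r := inv_pos.2 (two_div_qkR_succ_sub_one_div_qkR_pos k)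
    have hyoung : ∀ β ∈ univ.erase (vzero k),
        eLpNorm' (fun t => eLpNorm' (fun y => F (Fin.cons false β) y * F (Fin.cons true β) (y + t))
          q volume) r volume ≤
        eLpNorm' (F (Fin.cons false β)) Q volume * eLpNorm' (F (Fin.cons true β)) Q volume := by
      intro β hβ
      have hk : 1 ≤ k := pos_of_ne_vzero (ne_of_mem_erase hβ)
      refine eLpNorm'_eLpNorm'_mul_comp_add_le (hF _) (hF _) (qkR_pos hk) hr
        (qkR_le_qkR_succ hk) ?_
      simp only [r, one_div (_ - _)⁻¹, inv_inv]
      ring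
    have htranslate : eLpNorm' (fun t => F (Fin.cons true (vzero k)) (x + t)) Q volume =
        eLpNorm' (F (Fin.cons true (vzero k))) Q volume := by
      simp only [eLpNorm',
        lintegral_add_left_eq_self (fun y => ‖F (Fin.cons true (vzero k)) y‖ₑ ^ Q) x]
    have hexponents : 1 / Q + ∑ _β ∈ univ.erase (vzero k), 1 / r = 1 := by
      rw [sum_const, card_erase_of_mem (mem_univ _), card_univ, Fintype.card_fun,
        Fintype.card_bool, Fintype.card_fin, nsmul_eq_mul, Nat.cast_sub Nat.one_le_two_pow,
        one_div r, inv_inv]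
      push_cast
      exact qkR_succ_holder_exponents k
    calc ∫⁻ h : Fin (k + 1) → Fin d → ℝ, ∏ α ∈ univ.erase (vzero (k + 1)), F α (x + dotB α h)
        = ∫⁻ t, F (Fin.cons true (vzero k)) (x + t) *
            ∫⁻ h' : Fin k → Fin d → ℝ, ∏ β ∈ univ.erase (vzero k),
              F (Fin.cons false β) (x + dotB β h') * F (Fin.cons true β) (x + dotB β h' + t) :=
          lintegral_prod_cube_succ F hF x
      _ ≤ ∫⁻ t, F (Fin.cons true (vzero k)) (x + t) * ∏ β ∈ univ.erase (vzero k),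
            eLpNorm' (fun y => F (Fin.cons false β) y * F (Fin.cons true β) (y + t)) q volume := by
          gcongr with t
          exact ih (fun β y => F (Fin.cons false β) y * F (Fin.cons true β) (y + t))
            (fun β => by fun_prop)
      _ ≤ eLpNorm' (fun t => F (Fin.cons true (vzero k)) (x + t)) Q volume *
            ∏ β ∈ univ.erase (vzero k), eLpNorm' (fun t => eLpNorm'
              (fun y => F (Fin.cons false β) y * F (Fin.cons true β) (y + t)) q volume) r volume :=
          lintegral_mul_prod_le_eLpNorm'_mul_prod _ (by fun_prop)
            (fun β _ => by simp only [eLpNorm', enorm_eq_self]; fun_prop) hQ (fun _ _ => hr)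
            hexponents
      _ ≤ eLpNorm' (F (Fin.cons true (vzero k))) Q volume *
            ∏ β ∈ univ.erase (vzero k),
              (eLpNorm' (F (Fin.cons false β)) Q volume *
                eLpNorm' (F (Fin.cons true β)) Q volume) := by
          rw [htranslate]
          gcongr with β hβ
          exact hyoung β hβ
      _ = ∏ α ∈ univ.erase (vzero (k + 1)), eLpNorm' (F α) Q volume := by
          rw [prod_erase_vzero_succ, ← mul_prod_erase univ _ (mem_univ (vzero k)), prod_mul_distrib]
          ring

end CubicProduct

/-- pointwise bound for the cubic convolution product by `L^{q_k}` norms. -/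
theorem stmt1 (k d : ℕ) (hk : 2 ≤ k) :
    ∃ C : ℝ, 0 < C ∧
      ∀ f : (Fin k → Bool) → (Fin d → ℝ) → ℝ,
        (∀ α, Measurable (f α)) → (∀ α x, 0 ≤ f α x) →
        (∀ α, MemLp (f α) (ENNReal.ofReal (qkR k)) volume) →
        ∀ x : Fin d → ℝ,
          cubeD k d f x ≤
            C * ∏ α ∈ Finset.univ.filter (fun α : Fin k → Bool => α ≠ vzero k),
              lpN d (ENNReal.ofReal (qkR k)) (f α) := by
  refine ⟨1, one_pos, fun f hf _ hmem x => ?_⟩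
  have hq : 0 < qkR k := qkR_pos (by omega)
  have hnorm (α) :
      eLpNorm' (f α) (qkR k) volume = eLpNorm (f α) (ENNReal.ofReal (qkR k)) volume := by
    rw [eLpNorm_eq_eLpNorm' (by simpa using hq) ENNReal.ofReal_ne_top, ENNReal.toReal_ofReal hq.le]
  have hbound := lintegral_prod_cube_le_prod_eLpNorm' k (fun α y => ‖f α y‖ₑ)
    (fun α => (hf α).enorm) x
  simp only [eLpNorm'_enorm, hnorm] at hbound
  rw [one_mul, cubeD, filter_ne']
  calc ∫ h, ∏ α ∈ univ.erase (vzero k), f α (x + dotB α h)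
      ≤ ‖∫ h, ∏ α ∈ univ.erase (vzero k), f α (x + dotB α h)‖ₑ.toReal := by
        rw [toReal_enorm]; exact Real.le_norm_self _
    _ ≤ (∏ α ∈ univ.erase (vzero k), eLpNorm (f α) (ENNReal.ofReal (qkR k)) volume).toReal := by
        refine ENNReal.toReal_mono (ENNReal.prod_ne_top fun α _ => (hmem α).2.ne)
          ((enorm_integral_le_lintegral_enorm _).trans ?_)
        simpa [enorm, nnnorm_prod] using hbound
    _ = ∏ α ∈ univ.erase (vzero k), lpN d (ENNReal.ofReal (qkR k)) (f α) := ENNReal.toReal_prod _ _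
end
end
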